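/- Let 0 < q₁ < p₁ ≤ 1, 0 < q₂ < p₂ ≤ 1 and let n, m ≥ 1 be natural numbers. Then for all (x,y) ∈ [0,1]², the second central moments of the bivariate (p,q)-Bernstein operator are B_{n,m}((s,t) ↦ (s-x)²; x,y) = (p₁^{n-1}/[n]_{p₁,q₁})(x - x²) and B_{n,m}((s,t) ↦ (t-y)²; x,y) = (p₂^{m-1}/[m]_{p₂,q₂})(y - y²). -/

import Mathlib

open Finset Set Filter Topology

/-- The (p,q)-integer `[n]_{p,q} = ∑_{i=0}^{n-1} p^(n-1-i) q^i`. -/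
noncomputable def pqInt (p q : ℝ) (n : ℕ) : ℝ :=
  ∑ i ∈ Finset.range n, p ^ (n - 1 - i) * q ^ i

/-- The (p,q)-factorial `[n]_{p,q}! = ∏_{j=1}^n [j]_{p,q}`. -/
noncomputable def pqFactorial (p q : ℝ) (n : ℕ) : ℝ :=
  ∏ j ∈ Finset.range n, pqInt p q (j + 1)

/-- The (p,q)-binomial coefficient. -/
noncomputable def pqChoose (p q : ℝ) (n k : ℕ) : ℝ :=
  pqFactorial p q n / (pqFactorial p q k * pqFactorial p q (n - k))

/-- The node `p^(n-k) [k]_{p,q} / [n]_{p,q}` of the (p,q)-Bernstein operator. -/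
noncomputable def pqNode (p q : ℝ) (n k : ℕ) : ℝ :=
  p ^ (n - k) * pqInt p q k / pqInt p q n

/-- The basis function
`p^((k(k-1)-n(n-1))/2) C(n,k)_{p,q} x^k ∏_{s=0}^{n-k-1} (p^s - q^s x)`,
where `p^((k(k-1)-n(n-1))/2)` is written as `p^(k(k-1)/2) / p^(n(n-1)/2)`. -/
noncomputable def pqBasis (p q : ℝ) (n k : ℕ) (x : ℝ) : ℝ :=
  (p ^ (k.choose 2) / p ^ (n.choose 2)) * pqChoose p q n k * x ^ k *
    ∏ s ∈ Finset.range (n - k), (p ^ s - q ^ s * x)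

/-- The (p,q)-Bernstein operator `B_{n,p,q}(f;x)`. -/
noncomputable def pqBernstein (p q : ℝ) (n : ℕ) (f : ℝ → ℝ) (x : ℝ) : ℝ :=
  ∑ k ∈ Finset.range (n + 1), pqBasis p q n k x * f (pqNode p q n k)

/-- The bivariate (p,q)-Bernstein operator
`B_{n,m}^{(p₁,q₁),(p₂,q₂)}(f;x,y)`. -/
noncomputable def pqBernstein2 (p₁ q₁ p₂ q₂ : ℝ) (n m : ℕ)
    (f : ℝ → ℝ → ℝ) (x y : ℝ) : ℝ :=
  ∑ k ∈ Finset.range (n + 1), ∑ j ∈ Finset.range (m + 1),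
    pqBasis p₁ q₁ n k x * pqBasis p₂ q₂ m j y *
      f (pqNode p₁ q₁ n k) (pqNode p₂ q₂ m j)

/-!
The basis functions sum to one because the (p,q)-Pascal rule makes their sum telescope. The
identity `R_{n+1,k+1}(x) · node_{n+1,k+1} = x R_{n,k}(x)` together with the node recursion
`[n+1] node_{n+1,k+1} = p^n + q [n] node_{n,k}` gives the first two moments `x` and
`x (p^n + q [n] x) / [n+1]`; since `[n+1] = p^n + q [n]`, the second central moment is
`p^n / [n+1] · (x - x²)`. The bivariate operator factors on products `g(s) h(t)`, so a function
of one variable only sees the univariate operator.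
-/

lemma Nat.succ_choose_two (n : ℕ) : (n + 1).choose 2 = n.choose 2 + n := by
  rw [Nat.choose_succ_succ', Nat.choose_one_right, add_comm]

section pqInt

variable {p q : ℝ}

@[simp]
lemma pqInt_zero : pqInt p q 0 = 0 := by simp [pqInt]

lemma pqInt_succ (n : ℕ) : pqInt p q (n + 1) = p * pqInt p q n + q ^ n := by
  rw [pqInt, sum_range_succ, pqInt, mul_sum, Nat.add_sub_cancel, Nat.sub_self, pow_zero, one_mul]
  congr 1
  refine sum_congr rfl fun i hi => ?_
  rw [show n - i = n - 1 - i + 1 by grind, pow_succ]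
  ring

lemma pqInt_succ' (n : ℕ) : pqInt p q (n + 1) = p ^ n + q * pqInt p q n := by
  rw [pqInt, sum_range_succ', pqInt, mul_sum, Nat.add_sub_cancel, add_comm]
  simp only [pow_zero, mul_one, Nat.sub_zero]
  congr 1
  refine sum_congr rfl fun i _ => ?_
  rw [show n - (i + 1) = n - 1 - i by omega, pow_succ]
  ring

lemma pqInt_add (k d : ℕ) :
    pqInt p q (k + d) = p ^ d * pqInt p q k + q ^ k * pqInt p q d := by
  induction d with
  | zero => simp
  | succ d ih =>
    rw [← add_assoc, pqInt_succ, ih, pqInt_succ, pow_add, pow_succ]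
    ring

lemma pqInt_pos (hp : 0 < p) (hq : 0 < q) {n : ℕ} (hn : n ≠ 0) : 0 < pqInt p q n :=
  sum_pos (fun _ _ => by positivity) (nonempty_range_iff.mpr hn)

end pqInt

section pqChoose

variable {p q : ℝ}

lemma pqFactorial_succ (n : ℕ) :
    pqFactorial p q (n + 1) = pqFactorial p q n * pqInt p q (n + 1) :=
  prod_range_succ _ _

@[simp]
lemma pqFactorial_zero : pqFactorial p q 0 = 1 :=
  prod_range_zero _

lemma pqFactorial_pos (hp : 0 < p) (hq : 0 < q) (n : ℕ) : 0 < pqFactorial p q n :=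
  prod_pos fun j _ => pqInt_pos hp hq j.succ_ne_zero

lemma pqChoose_zero_right (hp : 0 < p) (hq : 0 < q) (n : ℕ) : pqChoose p q n 0 = 1 := by
  rw [pqChoose, Nat.sub_zero, pqFactorial_zero, one_mul,
    div_self (pqFactorial_pos hp hq n).ne']

lemma pqChoose_self (hp : 0 < p) (hq : 0 < q) (n : ℕ) : pqChoose p q n n = 1 := by
  rw [pqChoose, Nat.sub_self, pqFactorial_zero, mul_one,
    div_self (pqFactorial_pos hp hq n).ne']

lemma pqChoose_succ_succ_mul (hp : 0 < p) (hq : 0 < q) (n k : ℕ) :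
    pqChoose p q (n + 1) (k + 1) * pqInt p q (k + 1) =
      pqInt p q (n + 1) * pqChoose p q n k := by
  rw [pqChoose, pqChoose, Nat.add_sub_add_right, pqFactorial_succ n, pqFactorial_succ k]
  have := (pqFactorial_pos hp hq k).ne'
  have := (pqFactorial_pos hp hq (n - k)).ne'
  have := (pqInt_pos hp hq k.succ_ne_zero).ne'
  field_simp

/-- The (p,q)-Pascal rule, obtained from `[n+1] = p^(k+1) [n-k] + q^(n-k) [k+1]`. -/
lemma pqChoose_succ_succ (hp : 0 < p) (hq : 0 < q) {n k : ℕ} (hk : k < n) :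
    pqChoose p q (n + 1) (k + 1) =
      p ^ (k + 1) * pqChoose p q n (k + 1) + q ^ (n - k) * pqChoose p q n k := by
  obtain ⟨d, rfl⟩ : ∃ d, n = k + 1 + d := ⟨n - (k + 1), by omega⟩
  have hsplit : pqInt p q (k + 1 + d + 1) =
      p ^ (k + 1) * pqInt p q (d + 1) + q ^ (d + 1) * pqInt p q (k + 1) := by
    rw [show k + 1 + d + 1 = d + 1 + (k + 1) by ring, pqInt_add]
  rw [pqChoose, pqChoose, pqChoose, show k + 1 + d + 1 - (k + 1) = d + 1 by omega,
    show k + 1 + d - (k + 1) = d by omega, show k + 1 + d - k = d + 1 by omega,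
    pqFactorial_succ (k + 1 + d), hsplit, pqFactorial_succ d, pqFactorial_succ k]
  have := (pqFactorial_pos hp hq k).ne'
  have := (pqFactorial_pos hp hq d).ne'
  have := (pqInt_pos hp hq k.succ_ne_zero).ne'
  have := (pqInt_pos hp hq d.succ_ne_zero).ne'
  field_simp

end pqChoose

section pqBasis

variable {p q : ℝ}

lemma pqBasis_zero_zero (hp : 0 < p) (hq : 0 < q) (x : ℝ) : pqBasis p q 0 0 x = 1 := by
  simp [pqBasis, pqChoose_zero_right hp hq]

lemma pqBasis_succ_zero (hp : 0 < p) (hq : 0 < q) (n : ℕ) (x : ℝ) :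
    pqBasis p q (n + 1) 0 x = pqBasis p q n 0 x - (q / p) ^ n * x * pqBasis p q n 0 x := by
  rw [pqBasis, pqBasis, pqChoose_zero_right hp hq, pqChoose_zero_right hp hq,
    Nat.succ_choose_two, Nat.sub_zero, Nat.sub_zero, prod_range_succ, pow_add]
  generalize ∏ s ∈ range n, (p ^ s - q ^ s * x) = P
  have := hp.ne'
  simp only [div_pow]
  field_simp

lemma pqBasis_succ_self (hp : 0 < p) (hq : 0 < q) (n : ℕ) (x : ℝ) :
    pqBasis p q (n + 1) (n + 1) x = x * pqBasis p q n n x := by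
  simp only [pqBasis, pqChoose_self hp hq, Nat.sub_self, prod_range_zero,
    div_self (pow_ne_zero _ hp.ne')]
  ring

lemma pqBasis_succ_succ (hp : 0 < p) (hq : 0 < q) {n k : ℕ} (hk : k < n) (x : ℝ) :
    pqBasis p q (n + 1) (k + 1) x =
      pqBasis p q n (k + 1) x - (q / p) ^ (n - (k + 1)) * x * pqBasis p q n (k + 1) x +
        (q / p) ^ (n - k) * x * pqBasis p q n k x := by
  obtain ⟨d, rfl⟩ : ∃ d, n = k + 1 + d := ⟨n - (k + 1), by omega⟩
  rw [pqBasis, pqBasis, pqBasis, pqChoose_succ_succ hp hq hk,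
    show k + 1 + d - (k + 1) = d by omega, show k + 1 + d - k = d + 1 by omega,
    show k + 1 + d + 1 - (k + 1) = d + 1 by omega,
    Nat.succ_choose_two (k + 1 + d), Nat.succ_choose_two k, prod_range_succ]
  generalize ∏ s ∈ range d, (p ^ s - q ^ s * x) = P
  have := hp.ne'
  simp only [div_pow]
  field_simp
  ring

lemma sum_pqBasis (hp : 0 < p) (hq : 0 < q) (n : ℕ) (x : ℝ) :
    ∑ k ∈ range (n + 1), pqBasis p q n k x = 1 := by
  induction n with
  | zero => simp [pqBasis_zero_zero hp hq]
  | succ n ih =>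
    set g : ℕ → ℝ := fun k => (q / p) ^ (n - k) * x * pqBasis p q n k x
    have hmid : ∀ k ∈ range n, pqBasis p q (n + 1) (k + 1) x =
        pqBasis p q n (k + 1) x + (g k - g (k + 1)) := fun k hk => by
      rw [pqBasis_succ_succ hp hq (mem_range.mp hk)]
      ring
    have hlast : pqBasis p q (n + 1) (n + 1) x = g n := by
      simp [g, pqBasis_succ_self hp hq]
    rw [sum_range_succ, sum_range_succ', sum_congr rfl hmid, sum_add_distrib,
      sum_range_sub', pqBasis_succ_zero hp hq, hlast, ← ih, sum_range_succ' _ n]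
    simp only [g, Nat.sub_zero]
    ring

end pqBasis

section pqBernstein

variable {p q : ℝ}

lemma pqBernstein_one (hp : 0 < p) (hq : 0 < q) (n : ℕ) (x : ℝ) :
    pqBernstein p q n (fun _ => 1) x = 1 := by
  simp only [pqBernstein, mul_one, sum_pqBasis hp hq]

lemma pqNode_zero_right (n : ℕ) : pqNode p q n 0 = 0 := by
  simp [pqNode]

lemma pqInt_mul_pqNode (hp : 0 < p) (hq : 0 < q) {n k : ℕ} (hk : k ≤ n) :
    pqInt p q n * pqNode p q n k = p ^ (n - k) * pqInt p q k := by
  rcases Nat.eq_zero_or_pos n with rfl | hn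
  · simp [Nat.le_zero.mp hk]
  · rw [pqNode, mul_div_cancel₀ _ (pqInt_pos hp hq hn.ne').ne']

lemma pqInt_mul_pqNode_succ_succ (hp : 0 < p) (hq : 0 < q) {n k : ℕ} (hk : k ≤ n) :
    pqInt p q (n + 1) * pqNode p q (n + 1) (k + 1) =
      p ^ n + q * (pqInt p q n * pqNode p q n k) := by
  rw [pqInt_mul_pqNode hp hq hk, pqInt_mul_pqNode hp hq (by omega : k + 1 ≤ n + 1),
    Nat.add_sub_add_right, pqInt_succ', mul_add, ← pow_add, Nat.sub_add_cancel hk]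
  ring

lemma pqBasis_mul_pqNode (hp : 0 < p) (hq : 0 < q) {n k : ℕ} (hk : k ≤ n) (x : ℝ) :
    pqBasis p q (n + 1) (k + 1) x * pqNode p q (n + 1) (k + 1) = x * pqBasis p q n k x := by
  have hchoose : pqChoose p q (n + 1) (k + 1) =
      pqInt p q (n + 1) * pqChoose p q n k / pqInt p q (k + 1) := by
    rw [eq_div_iff (pqInt_pos hp hq k.succ_ne_zero).ne']
    exact pqChoose_succ_succ_mul hp hq n k
  obtain ⟨d, rfl⟩ : ∃ d, n = k + d := ⟨n - k, by omega⟩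
  rw [pqBasis, pqBasis, pqNode, hchoose, Nat.add_sub_add_right, Nat.add_sub_cancel_left,
    Nat.succ_choose_two (k + d), Nat.succ_choose_two k]
  generalize ∏ s ∈ range d, (p ^ s - q ^ s * x) = P
  have := (pqInt_pos hp hq (k + d).succ_ne_zero).ne'
  have := (pqInt_pos hp hq k.succ_ne_zero).ne'
  have := hp.ne'
  field_simp
  ring

lemma pqBernstein_mul_id (hp : 0 < p) (hq : 0 < q) (n : ℕ) (f : ℝ → ℝ) (x : ℝ) :
    pqBernstein p q (n + 1) (fun t => t * f t) x =
      x * ∑ k ∈ range (n + 1), pqBasis p q n k x * f (pqNode p q (n + 1) (k + 1)) := by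
  rw [pqBernstein, sum_range_succ', pqNode_zero_right, zero_mul, mul_zero, add_zero, mul_sum]
  refine sum_congr rfl fun k hk => ?_
  rw [← mul_assoc, pqBasis_mul_pqNode hp hq (Nat.lt_succ_iff.mp (mem_range.mp hk)), mul_assoc]

lemma pqBernstein_id (hp : 0 < p) (hq : 0 < q) (n : ℕ) (x : ℝ) :
    pqBernstein p q (n + 1) (fun t => t) x = x := by
  simpa [sum_pqBasis hp hq] using pqBernstein_mul_id hp hq n (fun _ => 1) x

lemma pqBernstein_sq (hp : 0 < p) (hq : 0 < q) (n : ℕ) (x : ℝ) :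
    pqBernstein p q (n + 1) (· ^ 2) x =
      x * (p ^ n + q * pqInt p q n * x) / pqInt p q (n + 1) := by
  have hmoment : pqInt p q n * ∑ k ∈ range (n + 1), pqBasis p q n k x * pqNode p q n k =
      pqInt p q n * x := by
    rcases n with _ | n
    · simp
    · exact congrArg _ (pqBernstein_id hp hq n x)
  have hint := (pqInt_pos hp hq n.succ_ne_zero).ne'
  have hterm : ∀ k ∈ range (n + 1), pqBasis p q n k x * pqNode p q (n + 1) (k + 1) =
      (p ^ n * pqBasis p q n k x + q * pqInt p q n * (pqBasis p q n k x * pqNode p q n k)) /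
        pqInt p q (n + 1) := fun k hk => by
    rw [eq_div_iff hint, mul_assoc, mul_comm (pqNode _ _ _ _),
      pqInt_mul_pqNode_succ_succ hp hq (Nat.lt_succ_iff.mp (mem_range.mp hk))]
    ring
  have hsq := pqBernstein_mul_id hp hq n (fun t => t) x
  simp only [← sq] at hsq
  rw [hsq, sum_congr rfl hterm, ← sum_div, sum_add_distrib, ← mul_sum, ← mul_sum,
    sum_pqBasis hp hq, mul_assoc, hmoment]
  ring

lemma pqBernstein_sub_sq (hp : 0 < p) (hq : 0 < q) {n : ℕ} (hn : n ≠ 0) (x : ℝ) :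
    pqBernstein p q n (fun t => (t - x) ^ 2) x = p ^ (n - 1) / pqInt p q n * (x - x ^ 2) := by
  obtain ⟨n, rfl⟩ : ∃ k, n = k + 1 := ⟨n - 1, by omega⟩
  have hexpand : pqBernstein p q (n + 1) (fun t => (t - x) ^ 2) x =
      pqBernstein p q (n + 1) (· ^ 2) x - 2 * x * pqBernstein p q (n + 1) (fun t => t) x +
        x ^ 2 * pqBernstein p q (n + 1) (fun _ => 1) x := by
    simp only [pqBernstein, mul_sum, ← sum_sub_distrib, ← sum_add_distrib]
    exact sum_congr rfl fun _ _ => by ring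
  have hint := (pqInt_pos hp hq n.succ_ne_zero).ne'
  rw [hexpand, pqBernstein_sq hp hq, pqBernstein_id hp hq, pqBernstein_one hp hq,
    Nat.add_sub_cancel]
  rw [pqInt_succ'] at hint ⊢
  field_simp
  ring

end pqBernstein

lemma pqBernstein2_mul (p₁ q₁ p₂ q₂ : ℝ) (n m : ℕ) (g h : ℝ → ℝ) (x y : ℝ) :
    pqBernstein2 p₁ q₁ p₂ q₂ n m (fun s t => g s * h t) x y =
      pqBernstein p₁ q₁ n g x * pqBernstein p₂ q₂ m h y := by
  rw [pqBernstein, pqBernstein, sum_mul_sum]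
  exact sum_congr rfl fun _ _ => sum_congr rfl fun _ _ => by ring

theorem pqBernstein2_central_moments_general (p₁ q₁ p₂ q₂ : ℝ) (n m : ℕ)
    (hq₁ : 0 < q₁) (hq₁p₁ : q₁ < p₁)
    (hq₂ : 0 < q₂) (hq₂p₂ : q₂ < p₂)
    (hn : 1 ≤ n) (hm : 1 ≤ m)
    (x y : ℝ) :
    pqBernstein2 p₁ q₁ p₂ q₂ n m (fun s _ => (s - x) ^ 2) x y =
      (p₁ ^ (n - 1) / pqInt p₁ q₁ n) * (x - x ^ 2) ∧
    pqBernstein2 p₁ q₁ p₂ q₂ n m (fun _ t => (t - y) ^ 2) x y =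
      (p₂ ^ (m - 1) / pqInt p₂ q₂ m) * (y - y ^ 2) := by
  have hp₁ : 0 < p₁ := hq₁.trans hq₁p₁
  have hp₂ : 0 < p₂ := hq₂.trans hq₂p₂
  have hfst := pqBernstein2_mul p₁ q₁ p₂ q₂ n m (fun s => (s - x) ^ 2) (fun _ => 1) x y
  have hsnd := pqBernstein2_mul p₁ q₁ p₂ q₂ n m (fun _ => 1) (fun t => (t - y) ^ 2) x y
  simp only [mul_one, one_mul] at hfst hsnd
  rw [hfst, hsnd, pqBernstein_one hp₂ hq₂, pqBernstein_one hp₁ hq₁, mul_one, one_mul]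
  exact ⟨pqBernstein_sub_sq hp₁ hq₁ (by omega) x, pqBernstein_sub_sq hp₂ hq₂ (by omega) y⟩

theorem pqBernstein2_central_moments (p₁ q₁ p₂ q₂ : ℝ) (n m : ℕ)
    (hq₁ : 0 < q₁) (hq₁p₁ : q₁ < p₁) (hp₁ : p₁ ≤ 1)
    (hq₂ : 0 < q₂) (hq₂p₂ : q₂ < p₂) (hp₂ : p₂ ≤ 1)
    (hn : 1 ≤ n) (hm : 1 ≤ m)
    (x y : ℝ) (hx : x ∈ Set.Icc (0 : ℝ) 1) (hy : y ∈ Set.Icc (0 : ℝ) 1) :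
    pqBernstein2 p₁ q₁ p₂ q₂ n m (fun s _ => (s - x) ^ 2) x y =
      (p₁ ^ (n - 1) / pqInt p₁ q₁ n) * (x - x ^ 2) ∧
    pqBernstein2 p₁ q₁ p₂ q₂ n m (fun _ t => (t - y) ^ 2) x y =
      (p₂ ^ (m - 1) / pqInt p₂ q₂ m) * (y - y ^ 2) :=
  pqBernstein2_central_moments_general p₁ q₁ p₂ q₂ n m hq₁ hq₁p₁ hq₂ hq₂p₂ hn hm x y
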